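/- arXiv:cs/0411006 — 14 statements merged into one kernel-verified Lean document; each statement's English description precedes it below -/
import Mathlib

section
/- Let d ≥ 0 and k be integers with d+2 ≤ k < ∞, and let λ > 1 be a real number satisfying Σ_{j=d+1}^{k+1} λ^{-j} = 1. Then there is no real p ∈ (0,1) such that simultaneously p^{k-d} = λ^{-(k+1)} and p^{k-d-i}(1-p) = λ^{-(k-i+1)} for every integer i with 1 ≤ i ≤ k-d. (That is, the bit stuffing phrase probability vector v^0 never equals the maxentropic phrase probability vector Λ, so bit stuffing is strictly suboptimal for these constraints.) -/
/-! Two consecutive bit stuffing phrase probabilities differ by the factor `p`, while the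
maxentropic ones differ by `λ⁻¹`; so `p = λ⁻¹`. The longest phrase then has probability
`λ⁻¹ ^ (k - d)` under bit stuffing but `λ⁻¹ ^ (k + 1)` under the maxentropic measure,
and these differ because `0 < λ⁻¹ < 1` and `d + 1 ≠ 0`. -/

theorem eq_of_pow_succ_mul_eq_pow_succ {K : Type*} [Field K] {p q c : K} {n m : ℕ}
    (hq : q ≠ 0) (hsucc : p ^ (n + 1) * c = q ^ (m + 1)) (h : p ^ n * c = q ^ m) :
    p = q := by
  have hqm : q ^ m ≠ 0 := pow_ne_zero m hq
  refine mul_right_cancel₀ hqm ?_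
  calc p * q ^ m = p ^ (n + 1) * c := by rw [← h]; ring
    _ = q * q ^ m := by rw [hsucc, pow_succ']

theorem stmt_0_general (d k : ℕ) (hk : d + 2 ≤ k) (lam : ℝ) (hlam : 1 < lam) :
    ¬ ∃ p : ℝ, 0 < p ∧ p < 1 ∧
      p ^ (k - d) = lam⁻¹ ^ (k + 1) ∧
      (∀ i : ℕ, 1 ≤ i → i ≤ k - d →
        p ^ (k - d - i) * (1 - p) = lam⁻¹ ^ (k - i + 1)) := by
  rintro ⟨p, -, -, hlongest, hphrase⟩
  obtain ⟨m, rfl⟩ : ∃ m, k = d + 2 + m := ⟨k - (d + 2), by omega⟩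
  have hlam₀ : 0 < lam⁻¹ := inv_pos.mpr (zero_lt_one.trans hlam)
  have hp : p = lam⁻¹ := by
    refine eq_of_pow_succ_mul_eq_pow_succ hlam₀.ne' (c := 1 - p) (n := m) (m := d + m + 1) ?_ ?_
    · have h := hphrase 1 le_rfl (by omega)
      rwa [show d + 2 + m - d - 1 = m + 1 by omega,
        show d + 2 + m - 1 + 1 = d + m + 1 + 1 by omega] at h
    · have h := hphrase 2 (by omega) (by omega)
      rwa [show d + 2 + m - d - 2 = m by omega, show d + 2 + m - 2 + 1 = d + m + 1 by omega] at h
  subst hp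
  have hexp := pow_right_injective₀ hlam₀ (inv_lt_one_of_one_lt₀ hlam).ne hlongest
  omega

/-- Bit stuffing is strictly suboptimal for `d+2 ≤ k < ∞`: the bit stuffing phrase
probability vector never matches the maxentropic phrase probability vector. -/
theorem stmt_0 (d k : ℕ) (hk : d + 2 ≤ k) (lam : ℝ) (hlam : 1 < lam)
    (hroot : ∑ j ∈ Finset.Icc (d + 1) (k + 1), lam⁻¹ ^ j = 1) :
    ¬ ∃ p : ℝ, 0 < p ∧ p < 1 ∧
      p ^ (k - d) = lam⁻¹ ^ (k + 1) ∧
      (∀ i : ℕ, 1 ≤ i → i ≤ k - d →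
        p ^ (k - d - i) * (1 - p) = lam⁻¹ ^ (k - i + 1)) :=
  stmt_0_general d k hk lam hlam
end

section
/- Let d ≥ 1 and k be integers with d+2 ≤ k < ∞. Then the supremum over p ∈ (0,1) of R_1(p,d,k) is strictly greater than the supremum over p ∈ (0,1) of R_0(p,d,k); that is, the maximum average rate of the bit flipping algorithm exceeds the maximum average rate of the bit stuffing algorithm. -/
/-- Binary entropy function. -/
noncomputable def binEnt (p : ℝ) : ℝ := -p * Real.logb 2 p - (1 - p) * Real.logb 2 (1 - p)

/-- Average information rate of the symbol sliding algorithm SS(j). -/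
noncomputable def ssRate (j d k : ℕ) (p : ℝ) : ℝ :=
  binEnt p * (1 - p ^ (k - d)) /
    (1 - p ^ (k - d) + (1 - p) * (p ^ (k - d - j) - (j : ℝ) * p ^ (k - d) + (d : ℝ)))

/-!
Write `m = k - d`. The bit-stuffing rate is bounded by `h`, which vanishes at `0` and `1`, so it
attains its supremum at some `p ∈ (0, 1)`. If `p > 1/2`, bit flipping beats it at `p` itself: the
numerators agree and the denominators differ by `(1 - p) p^(m-1) (1 - 2p) < 0`. If `p < 1/2`, bit
flipping at `1 - p` beats it: `h` is symmetric, and after cross-multiplying, the claim reduces to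
a polynomial inequality that follows from `q^n - p^n ≤ q - p` for `p + q = 1`. Finally `p = 1/2`
is not even a critical point: `h'(1/2) = 0`, so the derivative there is a positive multiple of
the integer `d·4^m + (1 - m - d - md)·2^m - 1`, which is odd.
-/

open Real Set

lemma binEnt_eq_binEntropy_div (p : ℝ) : binEnt p = binEntropy p / log 2 := by
  unfold binEnt binEntropy logb
  rw [log_inv, log_inv]
  ring

lemma binEnt_pos {p : ℝ} (h0 : 0 < p) (h1 : p < 1) : 0 < binEnt p := by
  rw [binEnt_eq_binEntropy_div]
  exact div_pos (binEntropy_pos h0 h1) (log_pos one_lt_two)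

lemma binEnt_le_one (p : ℝ) : binEnt p ≤ 1 := by
  rw [binEnt_eq_binEntropy_div]
  exact (div_le_one (log_pos one_lt_two)).mpr binEntropy_le_log_two

lemma continuous_binEnt : Continuous binEnt :=
  (binEntropy_continuous.div_const _).congr fun p => (binEnt_eq_binEntropy_div p).symm

@[simp] lemma binEnt_zero : binEnt 0 = 0 := by simp [binEnt]

@[simp] lemma binEnt_one : binEnt 1 = 0 := by simp [binEnt]

lemma binEnt_two_inv : binEnt 2⁻¹ = 1 := by
  rw [binEnt_eq_binEntropy_div, binEntropy_two_inv, div_self (log_pos one_lt_two).ne']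

lemma binEnt_one_sub (p : ℝ) : binEnt (1 - p) = binEnt p := by
  rw [binEnt_eq_binEntropy_div, binEnt_eq_binEntropy_div, binEntropy_one_sub]

lemma hasDerivAt_binEnt_two_inv : HasDerivAt binEnt 0 2⁻¹ := by
  have h := (hasDerivAt_binEntropy (p := (2⁻¹ : ℝ)) (by norm_num) (by norm_num)).div_const (log 2)
  rw [show (1 : ℝ) - 2⁻¹ = 2⁻¹ by norm_num, sub_self, zero_div] at h
  exact h.congr_of_eventuallyEq (.of_eq (funext binEnt_eq_binEntropy_div))

lemma pow_succ_sub_pow_succ_le_sub_of_add_eq_one {p q : ℝ} (hp : 0 ≤ p) (hpq : p ≤ q)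
    (hs : p + q = 1) (n : ℕ) : q ^ (n + 1) - p ^ (n + 1) ≤ q - p := by
  induction n with
  | zero => simp
  | succ n ih =>
    have hpn : p ^ (n + 1) ≤ p := pow_le_of_le_one hp (by linarith) (by omega)
    calc q ^ (n + 2) - p ^ (n + 2) = q * (q ^ (n + 1) - p ^ (n + 1)) + p ^ (n + 1) * (q - p) := by
          ring
      _ ≤ q * (q - p) + p * (q - p) :=
          add_le_add (mul_le_mul_of_nonneg_left ih (by linarith))
            (mul_le_mul_of_nonneg_right hpn (by linarith))
      _ = q - p := by linear_combination (q - p) * hs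

lemma two_pow_mul_intCast_ne_one {m : ℕ} (hm : m ≠ 0) (y : ℤ) : (2 : ℝ) ^ m * y ≠ 1 := by
  intro h
  have h : (2 : ℤ) ^ m * y = 1 := by exact_mod_cast h
  have : (2 : ℤ) ∣ 1 := h ▸ dvd_mul_of_dvd_left (dvd_pow_self 2 hm) y
  norm_num at this

theorem IsCompact.exists_isMaxOn_of_le_outside {α β : Type*} [TopologicalSpace α]
    [LinearOrder β] [TopologicalSpace β] [ClosedIciTopology β] {f : α → β} {s K : Set α}
    {x₀ : α} (hK : IsCompact K) (hf : ContinuousOn f K) (hx₀ : x₀ ∈ K)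
    (hout : ∀ x ∈ s \ K, f x ≤ f x₀) : ∃ p ∈ K, IsMaxOn f s p := by
  obtain ⟨p, hpK, hmax⟩ := hK.exists_isMaxOn ⟨x₀, hx₀⟩ hf
  refine ⟨p, hpK, fun x hx => ?_⟩
  by_cases hxK : x ∈ K
  · exact hmax hxK
  · exact (hout x ⟨hx, hxK⟩).trans (hmax hx₀)

noncomputable def stuffingRate (d m : ℕ) (p : ℝ) : ℝ :=
  binEnt p * (1 - p ^ m) / (1 - p ^ m + (1 - p) * (p ^ m + d))

noncomputable def flippingRate (d m : ℕ) (p : ℝ) : ℝ :=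
  binEnt p * (1 - p ^ m) / (1 - p ^ m + (1 - p) * (p ^ (m - 1) - p ^ m + d))

lemma ssRate_zero (d k : ℕ) (p : ℝ) : ssRate 0 d k p = stuffingRate d (k - d) p := by
  simp [ssRate, stuffingRate]

lemma ssRate_one (d k : ℕ) (p : ℝ) : ssRate 1 d k p = flippingRate d (k - d) p := by
  simp [ssRate, flippingRate]

section Rates

variable {d m : ℕ} {p : ℝ}

lemma stuffingRate_den_pos (hm : m ≠ 0) (h0 : 0 ≤ p) (h1 : p < 1) :
    0 < 1 - p ^ m + (1 - p) * (p ^ m + d) := by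
  have : p ^ m < 1 := pow_lt_one₀ h0 h1 hm
  positivity

lemma flippingRate_den_sub_nonneg (h0 : 0 ≤ p) (h1 : p ≤ 1) :
    0 ≤ (1 - p) * (p ^ (m - 1) - p ^ m + d) := by
  have : p ^ m ≤ p ^ (m - 1) := pow_le_pow_of_le_one h0 h1 (Nat.sub_le m 1)
  apply mul_nonneg <;> linarith [(Nat.cast_nonneg d : (0 : ℝ) ≤ d)]

lemma flippingRate_den_pos (hm : m ≠ 0) (h0 : 0 ≤ p) (h1 : p < 1) :
    0 < 1 - p ^ m + (1 - p) * (p ^ (m - 1) - p ^ m + d) := by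
  have : p ^ m < 1 := pow_lt_one₀ h0 h1 hm
  linarith [flippingRate_den_sub_nonneg (d := d) (m := m) h0 h1.le]

lemma mul_div_le_left_of_le {α : Type*} [Field α] [LinearOrder α] [IsStrictOrderedRing α]
    {a b c : α} (ha : 0 ≤ a) (hbc : b ≤ c) (hc : 0 < c) :
    a * b / c ≤ a := by
  rw [mul_div_assoc]
  exact mul_le_of_le_one_right ha (div_le_one_of_le₀ hbc hc.le)

lemma stuffingRate_le_binEnt (hm : m ≠ 0) (h0 : 0 < p) (h1 : p < 1) :
    stuffingRate d m p ≤ binEnt p := by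
  refine mul_div_le_left_of_le (binEnt_pos h0 h1).le ?_ (stuffingRate_den_pos hm h0.le h1)
  have : 0 ≤ (1 - p) * (p ^ m + d) := by positivity
  linarith

lemma flippingRate_le_binEnt (hm : m ≠ 0) (h0 : 0 < p) (h1 : p < 1) :
    flippingRate d m p ≤ binEnt p := by
  refine mul_div_le_left_of_le (binEnt_pos h0 h1).le ?_ (flippingRate_den_pos hm h0.le h1)
  linarith [flippingRate_den_sub_nonneg (d := d) (m := m) h0.le h1.le]

lemma stuffingRate_pos (hm : m ≠ 0) (h0 : 0 < p) (h1 : p < 1) : 0 < stuffingRate d m p := by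
  have : p ^ m < 1 := pow_lt_one₀ h0.le h1 hm
  exact div_pos (mul_pos (binEnt_pos h0 h1) (by linarith)) (stuffingRate_den_pos hm h0.le h1)

lemma continuousOn_stuffingRate (hm : m ≠ 0) : ContinuousOn (stuffingRate d m) (Ioo 0 1) :=
  ((continuous_binEnt.mul (by fun_prop)).continuousOn).div (by fun_prop)
    fun _ hx => (stuffingRate_den_pos hm hx.1.le hx.2).ne'

lemma exists_isMaxOn_stuffingRate (hm : m ≠ 0) :
    ∃ p ∈ Ioo 0 1, IsMaxOn (stuffingRate d m) (Ioo 0 1) p := by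
  set c := stuffingRate d m 2⁻¹
  have hc : 0 < c := stuffingRate_pos hm (by norm_num) (by norm_num)
  set K := Icc 0 1 ∩ binEnt ⁻¹' Ici c
  have hKI : K ⊆ Ioo 0 1 := by
    rintro x ⟨⟨hx0, hx1⟩, hcx⟩
    refine ⟨hx0.lt_of_ne ?_, hx1.lt_of_ne ?_⟩ <;> rintro rfl <;>
      simp only [mem_preimage, mem_Ici, binEnt_zero, binEnt_one] at hcx <;> linarith
  have hK : IsCompact K := isCompact_Icc.inter_right (isClosed_Ici.preimage continuous_binEnt)
  have hhalf : 2⁻¹ ∈ K := ⟨by norm_num, stuffingRate_le_binEnt hm (by norm_num) (by norm_num)⟩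
  obtain ⟨p, hpK, hmax⟩ := hK.exists_isMaxOn_of_le_outside
    ((continuousOn_stuffingRate hm).mono hKI) hhalf fun x ⟨hx, hxK⟩ =>
      (stuffingRate_le_binEnt hm hx.1 hx.2).trans
        (not_le.1 fun h => hxK ⟨Ioo_subset_Icc_self hx, h⟩).le
  exact ⟨p, hKI hpK, hmax⟩

lemma stuffingRate_lt_flippingRate (hm : m ≠ 0) (h1 : p < 1) (hp : 2⁻¹ < p) :
    stuffingRate d m p < flippingRate d m p := by
  have h0 : 0 < p := lt_trans (by norm_num) hp
  have hpm : p ^ m < 1 := pow_lt_one₀ h0.le h1 hm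
  have hden : (1 - p ^ m + (1 - p) * (p ^ (m - 1) - p ^ m + d)) -
      (1 - p ^ m + (1 - p) * (p ^ m + d)) = -((1 - p) * p ^ (m - 1) * (2 * p - 1)) := by
    rw [← Nat.sub_one_add_one hm, pow_succ, Nat.add_sub_cancel]
    ring
  have hgap : 0 < (1 - p) * p ^ (m - 1) * (2 * p - 1) := by
    have : 0 < 2 * p - 1 := by linarith
    have : 0 < 1 - p := by linarith
    positivity
  exact div_lt_div_of_pos_left (mul_pos (binEnt_pos h0 h1) (by linarith))
    (flippingRate_den_pos hm h0.le h1) (by linarith)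

/-- With `q = 1 - p`, `u = p ^ (m - 1)` and `v = q ^ (m - 1)`, the right-hand side is
`(1 - q ^ m) * D₀(p) - (1 - p ^ m) * D₁(q)`, where `D₀`, `D₁` are the denominators of the
two rates. -/
lemma stuffing_flipping_cross_pos {d p q u v : ℝ} (hd : 1 ≤ d) (hp : 0 < p) (hpq : p < q)
    (hs : p + q = 1) (hu0 : 0 < u) (hu : u ≤ p) (hv : v ≤ q)
    (hA : v * q - u * p ≤ q - p) (hB : v - u ≤ q - p) :
    0 < d * ((q - p) - (v * q ^ 2 - u * p ^ 2)) +
      (q * u * p * (1 - v * q) - p ^ 2 * v * (1 - u * p)) := by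
  obtain rfl : q = 1 - p := by linarith
  have hcoeff : (1 - p - p) * p * (1 - u) ≤ (1 - p - p) - (v * (1 - p) ^ 2 - u * p ^ 2) := by
    nlinarith [mul_le_mul_of_nonneg_left hA (by linarith : (0 : ℝ) ≤ 1 - p)]
  have hcoeff_nonneg : 0 ≤ (1 - p - p) * p * (1 - u) := by
    have : 0 ≤ 1 - u := by linarith
    have : 0 ≤ 1 - p - p := by linarith
    positivity
  have hrest : p * (1 - p - p) * (u - p - u * v) + p ^ 2 * ((1 - p - p) - (v - u)) =
      (1 - p) * u * p * (1 - v * (1 - p)) - p ^ 2 * v * (1 - u * p) := by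
    ring
  have : 0 < p * (1 - p - p) * (1 - p - u * v) := by
    have : 0 < 1 - p - p := by linarith
    have : 0 < 1 - p - u * v := by nlinarith
    positivity
  have hscaled := le_mul_of_one_le_left (hcoeff_nonneg.trans hcoeff) hd
  linarith [mul_nonneg (sq_nonneg p) (sub_nonneg.2 hB)]

lemma stuffingRate_lt_flippingRate_one_sub (hd : 1 ≤ d) (hm : 2 ≤ m) (h0 : 0 < p)
    (hp : p < 2⁻¹) : stuffingRate d m p < flippingRate d m (1 - p) := by
  set q := 1 - p with hq
  have hpq : p < q := by linarith
  have hs : p + q = 1 := by ring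
  have h1 : p < 1 := by linarith
  have hq0 : 0 < q := by linarith
  have hq1 : q < 1 := by linarith
  rw [stuffingRate, flippingRate, binEnt_one_sub,
    div_lt_div_iff₀ (stuffingRate_den_pos (by omega) h0.le h1)
      (flippingRate_den_pos (by omega) hq0.le hq1)]
  obtain ⟨n, rfl⟩ : ∃ n, m = n + 2 := ⟨m - 2, by omega⟩
  have hA := pow_succ_sub_pow_succ_le_sub_of_add_eq_one h0.le hpq.le hs (n + 1)
  have hB := pow_succ_sub_pow_succ_le_sub_of_add_eq_one h0.le hpq.le hs n
  have key := stuffing_flipping_cross_pos (d := d) (by exact_mod_cast hd) h0 hpq hs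
    (pow_pos h0 _) (pow_le_of_le_one h0.le h1.le n.succ_ne_zero)
    (pow_le_of_le_one hq0.le hq1.le n.succ_ne_zero)
    (by rw [← pow_succ, ← pow_succ]; exact hA) hB
  rw [← sub_pos]
  convert mul_pos (binEnt_pos h0 h1) key using 1
  rw [show n + 2 - 1 = n + 1 by omega]
  simp only [hq, Nat.succ_eq_add_one]
  ring

lemma not_isLocalMax_stuffingRate_two_inv (hm : m ≠ 0) :
    ¬ IsLocalMax (stuffingRate d m) 2⁻¹ := by
  intro hloc
  have hpow : HasDerivAt (fun x : ℝ => x ^ m) (m * 2⁻¹ ^ (m - 1)) 2⁻¹ := hasDerivAt_pow m _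
  have hnum := hasDerivAt_binEnt_two_inv.mul ((hasDerivAt_const _ 1).sub hpow)
  have hden := ((hasDerivAt_const _ 1).sub hpow).add
    (((hasDerivAt_const _ 1).sub (hasDerivAt_id _)).mul (hpow.add_const (d : ℝ)))
  have hD : (0 : ℝ) < 1 - 2⁻¹ ^ m + (1 - 2⁻¹) * (2⁻¹ ^ m + d) :=
    stuffingRate_den_pos hm (by norm_num) (by norm_num)
  have hzero := hloc.hasDerivAt_eq_zero (hnum.div hden hD.ne')
  simp only [Pi.mul_apply, Pi.sub_apply, binEnt_two_inv, id_eq] at hzero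
  set t : ℝ := 2⁻¹ ^ m
  rw [div_eq_zero_iff, or_iff_left (pow_ne_zero 2 hD.ne'),
    show (2⁻¹ : ℝ) ^ (m - 1) = 2 * t by
      rw [← mul_inv_cancel_left₀ (two_ne_zero (α := ℝ)) (2⁻¹ ^ (m - 1)), ← pow_succ',
        Nat.sub_one_add_one hm]] at hzero
  have ht : t * 2 ^ m = 1 := by rw [← mul_pow]; norm_num
  refine two_pow_mul_intCast_ne_one hm (1 - m + d * (2 ^ m - m - 1)) ?_
  push_cast
  linear_combination
    (2 ^ m) ^ 2 * hzero + ((m - 1) * 2 ^ m + t * 2 ^ m + 1 + d * (m + 1) * 2 ^ m) * ht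

lemma exists_stuffingRate_lt_flippingRate_of_isMaxOn (hd : 1 ≤ d) (hm : 2 ≤ m)
    (hp : p ∈ Ioo 0 1) (hmax : IsMaxOn (stuffingRate d m) (Ioo 0 1) p) :
    ∃ q ∈ Ioo 0 1, stuffingRate d m p < flippingRate d m q := by
  rcases lt_trichotomy p 2⁻¹ with hlt | rfl | hgt
  · exact ⟨1 - p, ⟨by linarith [hp.2], by linarith [hp.1]⟩,
      stuffingRate_lt_flippingRate_one_sub hd hm hp.1 hlt⟩
  · exact absurd (hmax.isLocalMax (Ioo_mem_nhds hp.1 hp.2))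
      (not_isLocalMax_stuffingRate_two_inv (by omega))
  · exact ⟨p, hp, stuffingRate_lt_flippingRate (by omega) hp.2 hgt⟩

lemma bddAbove_flippingRate_image (hm : m ≠ 0) : BddAbove (flippingRate d m '' Ioo 0 1) :=
  ⟨1, forall_mem_image.2 fun x hx => (flippingRate_le_binEnt hm hx.1 hx.2).trans (binEnt_le_one x)⟩

end Rates

/-- For `d ≥ 1` and `d+2 ≤ k < ∞`, the maximum average rate of bit flipping (SS(1))
exceeds the maximum average rate of bit stuffing (SS(0)). -/
theorem stmt_2 (d k : ℕ) (hd : 1 ≤ d) (hk : d + 2 ≤ k) :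
    sSup ((fun p => ssRate 0 d k p) '' Set.Ioo (0 : ℝ) 1) <
      sSup ((fun p => ssRate 1 d k p) '' Set.Ioo (0 : ℝ) 1) := by
  have hm : 2 ≤ k - d := by omega
  simp only [ssRate_zero, ssRate_one]
  obtain ⟨p, hp, hmax⟩ := exists_isMaxOn_stuffingRate (d := d) (by omega : k - d ≠ 0)
  obtain ⟨q, hq, hlt⟩ := exists_stuffingRate_lt_flippingRate_of_isMaxOn hd hm hp hmax
  have hgreatest : IsGreatest (stuffingRate d (k - d) '' Ioo 0 1) (stuffingRate d (k - d) p) :=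
    ⟨mem_image_of_mem _ hp, forall_mem_image.2 hmax⟩
  rw [hgreatest.csSup_eq]
  exact hlt.trans_le (le_csSup (bddAbove_flippingRate_image (by omega)) (mem_image_of_mem _ hq))
end

section
/- Let d ≥ 0 and k be integers with d+2 ≤ k < ∞, and let λ > 1 be the real number satisfying Σ_{j=d+1}^{k+1} λ^{-j} = 1. There exists p ∈ (0,1) such that p^{k-d-1}(1-p) = λ^{-(k+1)}, p^{k-d} = λ^{-k}, and p^{k-d-i}(1-p) = λ^{-(k-i+1)} for every integer i with 2 ≤ i ≤ k-d, if and only if d = 2 and k = 4. (That is, among constraints with d+2 ≤ k < ∞, the bit flipping phrase probability vector v^1 matches the maxentropic vector Λ exactly when (d,k) = (2,4).) -/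
/-! Write `q = λ⁻¹ ∈ (0,1)`. Dividing the equations of two phrases whose lengths differ by one
gives `p` as a power of `q`: the phrases `0^k 1` and `0^{k-2} 1` give `p = q²`, while, when
`k - d ≥ 3`, the phrases `0^{k-2} 1` and `0^{k-3} 1` give `p = q`, which is impossible. Hence
`k = d + 2`, and `p^2 = q^k` with `p = q²` forces `k = 4`. Conversely, for `(d,k) = (2,4)` the root
equation `q³ + q⁴ + q⁵ = 1` factors as `(q² + 1)(q² + q³ - 1) = 0`, and `p = q²` works. -/

theorem eq_pow_of_pow_mul_eq_of_pow_succ_mul_eq {M : Type*} [CommMonoidWithZero M]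
    [IsRightCancelMulZero M] {p q x : M} {a b r : ℕ} (hq : q ≠ 0) (h : p ^ a * x = q ^ b)
    (h' : p ^ (a + 1) * x = q ^ (b + r)) : p = q ^ r :=
  mul_right_cancel₀ (pow_ne_zero b hq) <| calc
    p * q ^ b = p ^ (a + 1) * x := by rw [← h, pow_succ]; ac_rfl
    _ = q ^ r * q ^ b := by rw [h', pow_add, mul_comm]

theorem eq_two_and_eq_four_of_phrase_eqs {d k : ℕ} {p q : ℝ} (hq0 : 0 < q) (hq1 : q ≠ 1)
    (hk : d + 2 ≤ k) (h1 : p ^ (k - d - 1) * (1 - p) = q ^ (k + 1)) (h2 : p ^ (k - d) = q ^ k)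
    (h3 : ∀ i : ℕ, 2 ≤ i → i ≤ k - d → p ^ (k - d - i) * (1 - p) = q ^ (k - i + 1)) :
    d = 2 ∧ k = 4 := by
  obtain ⟨n, rfl⟩ := Nat.exists_eq_add_of_le hk
  have hinj := pow_right_injective₀ hq0 hq1
  have hA := h3 2 le_rfl (by omega)
  rw [show d + 2 + n - d - 2 = n by omega, show d + 2 + n - 2 + 1 = d + n + 1 by omega] at hA
  rw [show d + 2 + n - d - 1 = n + 1 by omega, show d + 2 + n + 1 = d + n + 1 + 2 by omega] at h1
  have hp : p = q ^ 2 := eq_pow_of_pow_mul_eq_of_pow_succ_mul_eq hq0.ne' hA h1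
  cases n with
  | zero =>
    rw [show d + 2 + 0 - d = 2 by omega, hp, ← pow_mul] at h2
    have := hinj h2
    omega
  | succ n =>
    have hB := h3 3 (by norm_num) (by omega)
    rw [show d + 2 + (n + 1) - d - 3 = n by omega,
      show d + 2 + (n + 1) - 3 + 1 = d + n + 1 by omega] at hB
    have hp' : p = q ^ 1 := eq_pow_of_pow_mul_eq_of_pow_succ_mul_eq hq0.ne' hB hA
    have := hinj (hp'.symm.trans hp)
    omega

theorem sq_add_pow_three_eq_one {q : ℝ} (h : ∑ j ∈ Finset.Icc 3 5, q ^ j = 1) :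
    q ^ 2 + q ^ 3 = 1 := by
  have hfactor : (q ^ 2 + 1) * (q ^ 2 + q ^ 3 - 1) = 0 := by
    rw [Finset.sum_Icc_succ_top (by norm_num), Finset.sum_Icc_succ_top (by norm_num),
      Finset.Icc_self, Finset.sum_singleton] at h
    linear_combination h
  have := (mul_eq_zero.1 hfactor).resolve_left (by positivity)
  linarith

/-- Among constraints with `d+2 ≤ k < ∞`, the bit flipping phrase probability vector
matches the maxentropic vector exactly when `(d,k) = (2,4)`. -/
theorem stmt_3 (d k : ℕ) (hk : d + 2 ≤ k) (lam : ℝ) (hlam : 1 < lam)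
    (hroot : ∑ j ∈ Finset.Icc (d + 1) (k + 1), lam⁻¹ ^ j = 1) :
    (∃ p : ℝ, 0 < p ∧ p < 1 ∧
      p ^ (k - d - 1) * (1 - p) = lam⁻¹ ^ (k + 1) ∧
      p ^ (k - d) = lam⁻¹ ^ k ∧
      (∀ i : ℕ, 2 ≤ i → i ≤ k - d →
        p ^ (k - d - i) * (1 - p) = lam⁻¹ ^ (k - i + 1))) ↔ (d = 2 ∧ k = 4) := by
  have hq0 : 0 < lam⁻¹ := inv_pos.2 (zero_lt_one.trans hlam)
  have hq1 : lam⁻¹ < 1 := inv_lt_one_of_one_lt₀ hlam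
  constructor
  · rintro ⟨p, -, -, h1, h2, h3⟩
    exact eq_two_and_eq_four_of_phrase_eqs hq0 hq1.ne hk h1 h2 h3
  · rintro ⟨rfl, rfl⟩
    have hcubic := sq_add_pow_three_eq_one hroot
    refine ⟨lam⁻¹ ^ 2, by positivity, pow_lt_one₀ hq0.le hq1 two_ne_zero, ?_, by rw [← pow_mul], ?_⟩
    · linear_combination -lam⁻¹ ^ 2 * hcubic
    · intro i hi2 hi
      obtain rfl : i = 2 := by omega
      linear_combination -hcubic
end

section
/- Let d ≥ 0 be an integer and let z > 1 be a real number. Then Σ_{l=d+1}^{2d+2} z^{-l} = 1 if and only if z^{-1} + z^{-(d+2)} = 1. (Consequently the capacity of the (d,2d+1) constraint equals the capacity of the (d+1,∞) constraint.) -/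
/-!
With `x = z⁻¹`, multiplying `1 - ∑_{l=d+1}^{2d+2} xˡ` by `1 - x` telescopes to
`1 - x - x^(d+1) + x^(2d+3)`, which factors as `(1 - x^(d+1)) (1 - x - x^(d+2))`.
For `0 < x < 1` the factors `1 - x` and `1 - x^(d+1)` are nonzero, so the two
characteristic equations have the same roots.
-/

theorem one_sub_mul_one_sub_sum_Icc_pow {R : Type*} [CommRing R] (x : R) (d : ℕ) :
    (1 - x) * (1 - ∑ l ∈ Finset.Icc (d + 1) (2 * d + 2), x ^ l) =
      (1 - x ^ (d + 1)) * (1 - x - x ^ (d + 2)) := by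
  have hgeom : (∑ l ∈ Finset.Icc (d + 1) (2 * d + 2), x ^ l) * (1 - x) =
      x ^ (d + 1) - x ^ (2 * d + 3) := by
    rw [← Finset.Ico_add_one_right_eq_Icc, geom_sum_Ico_mul_neg x (by omega)]
    rfl
  linear_combination (-1 : R) * hgeom

theorem sum_Icc_pow_eq_one_iff {R : Type*} [CommRing R] [NoZeroDivisors R] {x : R} (d : ℕ) (hx : x ≠ 1)
    (hxd : x ^ (d + 1) ≠ 1) :
    (∑ l ∈ Finset.Icc (d + 1) (2 * d + 2), x ^ l = 1) ↔ x + x ^ (d + 2) = 1 := by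
  have hx' : (1 : R) - x ≠ 0 := sub_ne_zero.mpr hx.symm
  have hxd' : (1 : R) - x ^ (d + 1) ≠ 0 := sub_ne_zero.mpr hxd.symm
  calc _ ↔ (1 - x) * (1 - ∑ l ∈ Finset.Icc (d + 1) (2 * d + 2), x ^ l) = 0 := by
        rw [mul_eq_zero_iff_left hx', sub_eq_zero, eq_comm]
    _ ↔ 1 - x - x ^ (d + 2) = 0 := by
        rw [one_sub_mul_one_sub_sum_Icc_pow, mul_eq_zero_iff_left hxd']
    _ ↔ _ := by rw [sub_sub, sub_eq_zero, eq_comm]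

/-- The characteristic equation of the `(d, 2d+1)` constraint holds iff the
characteristic equation of the `(d+1, ∞)` constraint holds. -/
theorem stmt_4 (d : ℕ) (z : ℝ) (hz : 1 < z) :
    (∑ l ∈ Finset.Icc (d + 1) (2 * d + 2), z⁻¹ ^ l = 1) ↔
      z⁻¹ + z⁻¹ ^ (d + 2) = 1 := by
  have hx0 : 0 < z⁻¹ := inv_pos.mpr (one_pos.trans hz)
  have hx1 : z⁻¹ < 1 := inv_lt_one_of_one_lt₀ hz
  exact sum_Icc_pow_eq_one_iff d hx1.ne (pow_lt_one₀ hx0.le hx1 (Nat.succ_ne_zero d)).ne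
end

section
/- Let d ≥ 0 be an integer, let k = 2d+1, let λ > 1 be a real number satisfying Σ_{j=d+1}^{2d+2} λ^{-j} = 1, and set p = λ^{-1}. Then p^{d+1} = λ^{-(d+1)}, 1-p = λ^{-(d+2)}, and p^{i-1}(1-p) = λ^{-(d+i+1)} for every integer i with 2 ≤ i ≤ d+1. (That is, the phrase probability vector of the symbol sliding algorithm SS(d+1) with bias λ^{-1} equals the maxentropic phrase probability vector Λ for the (d,2d+1) constraint.) -/
open Finset

/-- Multiplying the defining equation by `1 - x` gives `1 - x = x^(d+1) - x^(2d+3)`,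
which factors as `(1 - x^(d+1)) * (1 - x - x^(d+2)) = 0`. -/
theorem one_sub_eq_pow_of_sum_Icc_pow_eq_one {R : Type*} [CommRing R] [IsDomain R]
    {x : R} {d : ℕ} (hx : x ^ (d + 1) ≠ 1)
    (h : ∑ j ∈ Icc (d + 1) (2 * d + 2), x ^ j = 1) :
    1 - x = x ^ (d + 2) := by
  have hmul : 1 - x = x ^ (d + 1) - x ^ (2 * d + 2 + 1) := by
    simpa only [Ico_add_one_right_eq_Icc, h, one_mul] using
      geom_sum_Ico_mul_neg x (m := d + 1) (n := 2 * d + 2 + 1) (by omega)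
  have hfactor : (1 - x ^ (d + 1)) * (1 - x - x ^ (d + 2)) = 0 := by
    linear_combination hmul
  have hroot := (mul_eq_zero.mp hfactor).resolve_left (sub_ne_zero.mpr hx.symm)
  linear_combination hroot

/-- For the `(d, 2d+1)` constraint, symbol sliding SS(d+1) with bias `p = lam⁻¹`
produces the maxentropic phrase probability vector. -/
theorem stmt_5 (d : ℕ) (lam : ℝ) (hlam : 1 < lam)
    (hroot : ∑ j ∈ Finset.Icc (d + 1) (2 * d + 2), lam⁻¹ ^ j = 1)
    (p : ℝ) (hp : p = lam⁻¹) :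
    p ^ (d + 1) = lam⁻¹ ^ (d + 1) ∧
    1 - p = lam⁻¹ ^ (d + 2) ∧
    (∀ i : ℕ, 2 ≤ i → i ≤ d + 1 →
      p ^ (i - 1) * (1 - p) = lam⁻¹ ^ (d + i + 1)) := by
  subst hp
  have hpow_lt : lam⁻¹ ^ (d + 1) < 1 :=
    pow_lt_one₀ (by positivity) (inv_lt_one_of_one_lt₀ hlam) (Nat.succ_ne_zero d)
  have hone_sub := one_sub_eq_pow_of_sum_Icc_pow_eq_one hpow_lt.ne hroot
  refine ⟨rfl, hone_sub, fun i hi _ => ?_⟩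
  rw [hone_sub, ← pow_add]
  congr 1
  omega
end

section
/- Let d ≥ 0 be an integer and let λ > 1 be a real number satisfying Σ_{j=d+1}^{2d+2} λ^{-j} = 1. Then h(λ^{-1}) · (1 - λ^{-(d+1)}) / (1 - λ^{-(d+1)} + (1 - λ^{-1})·(1 - (d+1)·λ^{-(d+1)} + d)) = log₂ λ. (That is, the average rate of symbol sliding SS(d+1) with bias λ^{-1} equals the Shannon capacity of the (d,2d+1) constraint.) -/
theorem binEnt_of_one_sub_eq_pow {p : ℝ} {n : ℕ} (h : 1 - p = p ^ n) :
    binEnt p = -(p + n * (1 - p)) * Real.logb 2 p := by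
  have hlog : Real.logb 2 (1 - p) = n * Real.logb 2 p := by rw [h, Real.logb_pow]
  rw [binEnt, hlog]
  ring

theorem pow_add_two_eq_one_sub_of_sum_Icc_eq_one {p : ℝ} {d : ℕ} (hp0 : 0 ≤ p) (hp1 : p < 1)
    (h : ∑ j ∈ Finset.Icc (d + 1) (2 * d + 2), p ^ j = 1) : p ^ (d + 2) = 1 - p := by
  have hgeom := geom_sum_Ico_mul p (show d + 1 ≤ 2 * d + 2 + 1 by omega)
  rw [Finset.Ico_add_one_right_eq_Icc, h] at hgeom
  have hfac : (p ^ (d + 1) - 1) * (p ^ (d + 2) - (1 - p)) = 0 := by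
    linear_combination -hgeom
  have hq : p ^ (d + 1) - 1 ≠ 0 := sub_ne_zero.2 (pow_lt_one₀ hp0 hp1 (by omega)).ne
  exact sub_eq_zero.1 ((mul_eq_zero.1 hfac).resolve_left hq)

/-- The average rate of symbol sliding SS(d+1) with bias `lam⁻¹` equals the Shannon
capacity `log₂ lam` of the `(d, 2d+1)` constraint. -/
theorem stmt_6 (d : ℕ) (lam : ℝ) (hlam : 1 < lam)
    (hroot : ∑ j ∈ Finset.Icc (d + 1) (2 * d + 2), lam⁻¹ ^ j = 1) :
    binEnt lam⁻¹ * (1 - lam⁻¹ ^ (d + 1)) /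
      (1 - lam⁻¹ ^ (d + 1) +
        (1 - lam⁻¹) * (1 - ((d : ℝ) + 1) * lam⁻¹ ^ (d + 1) + (d : ℝ))) =
    Real.logb 2 lam := by
  have hp0 : 0 < lam⁻¹ := inv_pos.2 (zero_lt_one.trans hlam)
  have hp1 : lam⁻¹ < 1 := inv_lt_one_of_one_lt₀ hlam
  have hpow := pow_add_two_eq_one_sub_of_sum_Icc_eq_one hp0.le hp1 hroot
  have hq : 0 < 1 - lam⁻¹ ^ (d + 1) := sub_pos.2 (pow_lt_one₀ hp0.le hp1 (by omega))
  have hr : 0 < 1 + ((d : ℝ) + 1) * (1 - lam⁻¹) := by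
    have : 0 < 1 - lam⁻¹ := sub_pos.2 hp1
    positivity
  have hden : 1 - lam⁻¹ ^ (d + 1) +
      (1 - lam⁻¹) * (1 - ((d : ℝ) + 1) * lam⁻¹ ^ (d + 1) + (d : ℝ)) =
      (1 - lam⁻¹ ^ (d + 1)) * (1 + ((d : ℝ) + 1) * (1 - lam⁻¹)) := by ring
  rw [hden, binEnt_of_one_sub_eq_pow hpow.symm, Real.logb_inv,
    div_eq_iff (mul_pos hq hr).ne']
  push_cast
  ring
end

section
/- Let d ≥ 0 be an integer, let λ > 1 be a real number satisfying λ^{-(d+1)} + λ^{-(d+2)} + λ^{-(d+3)} = 1, and suppose there exists p ∈ (0,1) with 1-p = λ^{-(d+1)}, p² = λ^{-(d+2)} and p(1-p) = λ^{-(d+3)}. Then d = 2. -/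
/-!
With `q = λ⁻¹`, dividing the last equation by the second gives `1 - p = q p`; comparing with the
first gives `p = q ^ d`. Then `p ^ 2 = q ^ (d + 2)` reads `q ^ (2 d) = q ^ (d + 2)`, and since
`0 < q < 1` the exponents agree.
-/

theorem eq_pow_of_phrase_probs {K : Type*} [Field K] {p q : K} {d : ℕ} (hp : p ≠ 0) (hq : q ≠ 0)
    (h1 : 1 - p = q ^ (d + 1)) (h2 : p ^ 2 = q ^ (d + 2)) (h3 : p * (1 - p) = q ^ (d + 3)) :
    p = q ^ d := by
  have hqp : 1 - p = q * p := mul_left_cancel₀ hp <| by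
    rw [h3, pow_succ' q (d + 2), ← h2]; ring
  exact mul_left_cancel₀ hq <| by rw [← hqp, h1, pow_succ']

theorem stmt_8_general (d : ℕ) (lam : ℝ) (hlam : 1 < lam)
    (hp : ∃ p : ℝ, 0 < p ∧ p < 1 ∧
      1 - p = lam⁻¹ ^ (d + 1) ∧ p ^ 2 = lam⁻¹ ^ (d + 2) ∧
      p * (1 - p) = lam⁻¹ ^ (d + 3)) :
    d = 2 := by
  obtain ⟨p, hp0, -, h1, h2, h3⟩ := hp
  have hq0 : 0 < lam⁻¹ := inv_pos.mpr (by linarith)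
  have hq1 : lam⁻¹ ≠ 1 := (inv_lt_one_of_one_lt₀ hlam).ne
  have hpq := eq_pow_of_phrase_probs hp0.ne' hq0.ne' h1 h2 h3
  have hexp : lam⁻¹ ^ (2 * d) = lam⁻¹ ^ (d + 2) := by
    rw [← h2, hpq, ← pow_mul, Nat.mul_comm]
  have := (pow_right_inj₀ hq0 hq1).mp hexp
  omega

/-- If the bit flipping phrase probability vector for the `(d, d+2)` constraint equals
the maxentropic vector, then `d = 2`. -/
theorem stmt_8 (d : ℕ) (lam : ℝ) (hlam : 1 < lam)
    (hroot : lam⁻¹ ^ (d + 1) + lam⁻¹ ^ (d + 2) + lam⁻¹ ^ (d + 3) = 1)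
    (hp : ∃ p : ℝ, 0 < p ∧ p < 1 ∧
      1 - p = lam⁻¹ ^ (d + 1) ∧ p ^ 2 = lam⁻¹ ^ (d + 2) ∧
      p * (1 - p) = lam⁻¹ ^ (d + 3)) :
    d = 2 :=
  stmt_8_general d lam hlam hp
end

section
/- Let z > 1 be a real number. Then z^{-3} + z^{-4} + z^{-5} = 1 if and only if z^{-2} + z^{-3} = 1. (Consequently the Shannon capacity of the (2,4) constraint equals the Shannon capacity of the (1,2) constraint.) -/
/-! The characteristic polynomial of the `(2,4)` constraint factors through that of the `(1,2)`
constraint: with `x = z⁻¹`, `x³ + x⁴ + x⁵ - 1 = (x² + 1)(x² + x³ - 1)`, and `x² + 1` never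
vanishes over the reals. -/

theorem pow_three_add_pow_four_add_pow_five_sub_one {R : Type*} [CommRing R] (x : R) :
    x ^ 3 + x ^ 4 + x ^ 5 - 1 = (x ^ 2 + 1) * (x ^ 2 + x ^ 3 - 1) := by
  ring

theorem pow_three_add_pow_four_add_pow_five_eq_one_iff {R : Type*} [CommRing R]
    [NoZeroDivisors R] {x : R} (hx : x ^ 2 + 1 ≠ 0) :
    x ^ 3 + x ^ 4 + x ^ 5 = 1 ↔ x ^ 2 + x ^ 3 = 1 := by
  rw [← sub_eq_zero, pow_three_add_pow_four_add_pow_five_sub_one, mul_eq_zero,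
    or_iff_right hx, sub_eq_zero]

theorem stmt_10_general (z : ℝ) :
    (z⁻¹ ^ 3 + z⁻¹ ^ 4 + z⁻¹ ^ 5 = 1) ↔ (z⁻¹ ^ 2 + z⁻¹ ^ 3 = 1) :=
  pow_three_add_pow_four_add_pow_five_eq_one_iff (by positivity)

/-- The characteristic equation of the `(2,4)` constraint holds iff the characteristic
equation of the `(1,2)` constraint holds; hence `C(2,4) = C(1,2)`. -/
theorem stmt_10 (z : ℝ) (hz : 1 < z) :
    (z⁻¹ ^ 3 + z⁻¹ ^ 4 + z⁻¹ ^ 5 = 1) ↔ (z⁻¹ ^ 2 + z⁻¹ ^ 3 = 1) :=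
  stmt_10_general z
end

section
/- Let 0 ≤ d < k < ∞ be integers, let j be an integer with 1 ≤ j ≤ k-d, and let p ∈ (0,1). Then R_j(p,d,k) > R_{j-1}(p,d,k) if and only if p^j + p > 1. -/
theorem binEnt_eq_binEntropy_div_log_two (p : ℝ) : binEnt p = Real.binEntropy p / Real.log 2 := by
  simp only [binEnt, Real.binEntropy, Real.logb, Real.log_inv]
  ring

theorem binEnt_pos_s11 {p : ℝ} (hp0 : 0 < p) (hp1 : p < 1) : 0 < binEnt p := by
  rw [binEnt_eq_binEntropy_div_log_two]
  exact div_pos (Real.binEntropy_pos hp0 hp1) (Real.log_pos one_lt_two)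

noncomputable def ssDenom (j d m : ℕ) (p : ℝ) : ℝ :=
  1 - p ^ m + (1 - p) * (p ^ (m - j) - (j : ℝ) * p ^ m + (d : ℝ))

theorem ssRate_eq (j d k : ℕ) (p : ℝ) :
    ssRate j d k p = binEnt p * (1 - p ^ (k - d)) / ssDenom j d (k - d) p :=
  rfl

theorem natCast_mul_pow_le_geom_sum {p : ℝ} (hp0 : 0 ≤ p) (hp1 : p ≤ 1) {j m : ℕ} (hj : j ≤ m) :
    (j : ℝ) * p ^ m ≤ ∑ i ∈ Finset.range m, p ^ i := by
  calc (j : ℝ) * p ^ m ≤ (m : ℝ) * p ^ m := by gcongr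
    _ = (Finset.range m).card • p ^ m := by simp
    _ ≤ ∑ i ∈ Finset.range m, p ^ i :=
      Finset.card_nsmul_le_sum _ _ _ fun i hi ↦
        pow_le_pow_of_le_one hp0 hp1 (Finset.mem_range.mp hi).le

theorem ssDenom_pos {p : ℝ} (hp0 : 0 < p) (hp1 : p < 1) {j m : ℕ} (hj : j ≤ m) (d : ℕ) :
    0 < ssDenom j d m p := by
  have h1p : 0 < 1 - p := sub_pos.mpr hp1
  -- `1 - p^m = (1 - p) ∑_{i<m} p^i`, and that sum dominates `j p^m`
  have hgeom : (1 - p) * ((j : ℝ) * p ^ m) ≤ 1 - p ^ m := by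
    rw [← mul_neg_geom_sum]
    exact mul_le_mul_of_nonneg_left (natCast_mul_pow_le_geom_sum hp0.le hp1.le hj) h1p.le
  have hpow : 0 < (1 - p) * p ^ (m - j) := mul_pos h1p (pow_pos hp0 _)
  have hd : 0 ≤ (1 - p) * (d : ℝ) := mul_nonneg h1p.le d.cast_nonneg
  unfold ssDenom
  nlinarith

theorem ssDenom_pred_sub_ssDenom (p : ℝ) {j m : ℕ} (hj1 : 1 ≤ j) (hj : j ≤ m) (d : ℕ) :
    ssDenom (j - 1) d m p - ssDenom j d m p = (1 - p) * p ^ (m - j) * (p ^ j + p - 1) := by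
  obtain ⟨i, rfl⟩ := Nat.exists_eq_add_of_le' hj1
  obtain ⟨n, rfl⟩ := Nat.exists_eq_add_of_le hj
  simp only [ssDenom, Nat.add_sub_cancel, Nat.add_sub_cancel_left,
    show i + 1 + n - i = n + 1 by omega, pow_add]
  push_cast
  ring

theorem stmt_11_general (d k j : ℕ) (hj1 : 1 ≤ j) (hj2 : j ≤ k - d)
    (p : ℝ) (hp0 : 0 < p) (hp1 : p < 1) :
    ssRate j d k p > ssRate (j - 1) d k p ↔ p ^ j + p > 1 := by
  have hnum : 0 < binEnt p * (1 - p ^ (k - d)) :=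
    mul_pos (binEnt_pos_s11 hp0 hp1) (sub_pos.mpr (pow_lt_one₀ hp0.le hp1 (by omega)))
  have hfactor : 0 < (1 - p) * p ^ (k - d - j) := mul_pos (sub_pos.mpr hp1) (pow_pos hp0 _)
  rw [gt_iff_lt, ssRate_eq, ssRate_eq,
    div_lt_div_iff_of_pos_left hnum (ssDenom_pos hp0 hp1 (by omega) d) (ssDenom_pos hp0 hp1 hj2 d),
    ← sub_pos, ssDenom_pred_sub_ssDenom p hj1 hj2, mul_pos_iff_of_pos_left hfactor, sub_pos]

/-- For `0 ≤ d < k < ∞`, `1 ≤ j ≤ k-d` and `p ∈ (0,1)`, the rate of SS(j) exceeds the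
rate of SS(j-1) if and only if `p^j + p > 1`. -/
theorem stmt_11 (d k j : ℕ) (hdk : d < k) (hj1 : 1 ≤ j) (hj2 : j ≤ k - d)
    (p : ℝ) (hp0 : 0 < p) (hp1 : p < 1) :
    ssRate j d k p > ssRate (j - 1) d k p ↔ p ^ j + p > 1 :=
  stmt_11_general d k j hj1 hj2 p hp0 hp1
end

section
/- Let 0 ≤ d < k < ∞ be integers, let n = k-d, let j be an integer with 0 ≤ j ≤ n, and let p ∈ (0,1). Then Σ_{i=0}^{j-1} (k-i+1)·p^{n-i-1}·(1-p) + (k-j+1)·p^n + Σ_{i=j+1}^{n} (k-i+1)·p^{n-i}·(1-p) = (1 - p^n + (1-p)·(p^{n-j} - j·p^n + d)) / (1-p). (That is, the average output codeword length L_out^j of the symbol sliding encoder SS(j) has this closed form.) -/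
/-!
Each step `j → j + 1` of the slide only exchanges the probabilities of phrases `j` and `j + 1`,
which changes `L_out^j` by `p ^ (n - j - 1) * (1 - p) - p ^ n`; the closed form changes by the
same amount. At `j = 0` the expectation is an arithmetic–geometric sum.
-/

open Finset

theorem one_sub_sq_mul_sum_range_add_mul_pow {R : Type*} [CommRing R] (c p : R) (n : ℕ) :
    (1 - p) ^ 2 * ∑ m ∈ range n, (c + m) * p ^ m =
      c * (1 - p) + p - p ^ n - (c + n - 1) * p ^ n * (1 - p) := by
  induction n with
  | zero => simp only [range_zero, sum_empty, mul_zero, pow_zero, Nat.cast_zero]; ring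
  | succ n ih =>
    rw [sum_range_succ, mul_add, ih]
    push_cast
    ring

theorem sum_Icc_one_sub_eq_sum_range {M : Type*} [AddCommMonoid M] (f : ℕ → M) (n : ℕ) :
    ∑ i ∈ Icc 1 n, f (n - i) = ∑ m ∈ range n, f m := by
  rw [← Ico_add_one_right_eq_Icc, sum_Ico_reflect f 1 le_rfl, Nat.add_sub_cancel, Nat.sub_self,
    range_eq_Ico]

/-- `L_out^j` for the `(d, d + n)` constraint. -/
noncomputable def symbolSlidingLength (d n j : ℕ) (p : ℝ) : ℝ :=
  (∑ i ∈ range j, ((d + n - i + 1 : ℕ) : ℝ) * p ^ (n - i - 1) * (1 - p)) +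
    ((d + n - j + 1 : ℕ) : ℝ) * p ^ n +
    ∑ i ∈ Icc (j + 1) n, ((d + n - i + 1 : ℕ) : ℝ) * p ^ (n - i) * (1 - p)

theorem symbolSlidingLength_zero (d n : ℕ) (p : ℝ) :
    symbolSlidingLength d n 0 p =
      (d + n + 1) * p ^ n + (∑ m ∈ range n, ((d + 1 : ℕ) + m : ℝ) * p ^ m) * (1 - p) := by
  have hterm : ∀ i ∈ Icc 1 n, ((d + n - i + 1 : ℕ) : ℝ) * p ^ (n - i) * (1 - p) =
      ((d + 1 : ℕ) + (n - i : ℕ) : ℝ) * p ^ (n - i) * (1 - p) := by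
    intro i hi
    rw [mem_Icc] at hi
    rw [show d + n - i + 1 = d + 1 + (n - i) by omega]
    push_cast
    ring
  rw [symbolSlidingLength, range_zero, sum_empty, zero_add, Nat.sub_zero, sum_congr rfl hterm,
    sum_Icc_one_sub_eq_sum_range (fun m ↦ ((d + 1 : ℕ) + m : ℝ) * p ^ m * (1 - p)), sum_mul]
  push_cast
  ring

theorem symbolSlidingLength_succ (d : ℕ) {n j : ℕ} (hj : j < n) (p : ℝ) :
    symbolSlidingLength d n (j + 1) p =
      symbolSlidingLength d n j p + p ^ (n - j - 1) * (1 - p) - p ^ n := by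
  unfold symbolSlidingLength
  rw [sum_range_succ, ← insert_Icc_add_one_left_eq_Icc (show j + 1 ≤ n by omega),
    sum_insert (by simp), show d + n - j + 1 = d + n - (j + 1) + 1 + 1 by omega,
    Nat.sub_sub n j 1]
  push_cast
  ring

theorem one_sub_mul_symbolSlidingLength (d : ℕ) {n j : ℕ} (hj : j ≤ n) (p : ℝ) :
    (1 - p) * symbolSlidingLength d n j p =
      1 - p ^ n + (1 - p) * (p ^ (n - j) - j * p ^ n + d) := by
  induction j with
  | zero =>
    have hsum := one_sub_sq_mul_sum_range_add_mul_pow ((d + 1 : ℕ) : ℝ) p n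
    rw [symbolSlidingLength_zero]
    push_cast at hsum ⊢
    linear_combination hsum
  | succ j ih =>
    have hpow : p ^ (n - j) = p * p ^ (n - (j + 1)) := by
      rw [← pow_succ', show n - (j + 1) + 1 = n - j by omega]
    rw [symbolSlidingLength_succ d (by omega), Nat.sub_sub]
    push_cast
    linear_combination ih (by omega) + (1 - p) * hpow

theorem stmt_13_general (d k n j : ℕ) (hdk : d < k) (hn : n = k - d) (hj : j ≤ n)
    (p : ℝ) (hp1 : p < 1) :
    (∑ i ∈ Finset.range j, ((k - i + 1 : ℕ) : ℝ) * p ^ (n - i - 1) * (1 - p)) +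
      ((k - j + 1 : ℕ) : ℝ) * p ^ n +
      ∑ i ∈ Finset.Icc (j + 1) n, ((k - i + 1 : ℕ) : ℝ) * p ^ (n - i) * (1 - p) =
    (1 - p ^ n + (1 - p) * (p ^ (n - j) - (j : ℝ) * p ^ n + (d : ℝ))) / (1 - p) := by
  obtain rfl : k = d + n := by omega
  rw [eq_div_iff (sub_ne_zero.mpr hp1.ne'), mul_comm]
  exact one_sub_mul_symbolSlidingLength d hj p

/-- Closed form for the average output codeword length `L_out^j` of the symbol sliding
encoder SS(j). -/
theorem stmt_13 (d k n j : ℕ) (hdk : d < k) (hn : n = k - d) (hj : j ≤ n)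
    (p : ℝ) (hp0 : 0 < p) (hp1 : p < 1) :
    (∑ i ∈ Finset.range j, ((k - i + 1 : ℕ) : ℝ) * p ^ (n - i - 1) * (1 - p)) +
      ((k - j + 1 : ℕ) : ℝ) * p ^ n +
      ∑ i ∈ Finset.Icc (j + 1) n, ((k - i + 1 : ℕ) : ℝ) * p ^ (n - i) * (1 - p) =
    (1 - p ^ n + (1 - p) * (p ^ (n - j) - (j : ℝ) * p ^ n + (d : ℝ))) / (1 - p) :=
  stmt_13_general d k n j hdk hn hj p hp1
end

section
/- Let 0 ≤ d < k < ∞ be integers, let n = k-d, let j be an integer with 0 ≤ j ≤ n, and let p ∈ (0,1). Define L_in = n·p^n + Σ_{t=1}^{n} (n-t+1)·p^{n-t}·(1-p) and L_out^j = Σ_{i=0}^{j-1} (k-i+1)·p^{n-i-1}·(1-p) + (k-j+1)·p^n + Σ_{i=j+1}^{n} (k-i+1)·p^{n-i}·(1-p). Then h(p)·L_in / L_out^j = h(p)·(1-p^n) / (1-p^n + (1-p)·(p^{n-j} - j·p^n + d)). (This is the closed-form expression for the average information rate R_j(p,d,k) of the symbol sliding algorithm SS(j).) -/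
open Finset

theorem sum_Icc_reflect {M : Type*} [AddCommMonoid M] (f : ℕ → M) (a n : ℕ) :
    ∑ i ∈ Icc (a + 1) n, f (n - i) = ∑ s ∈ range (n - a), f s := by
  rw [← Ico_add_one_right_eq_Icc, sum_Ico_reflect f _ le_rfl, Nat.sub_self, ← range_eq_Ico]
  congr 2
  omega

section CommRing

variable {R : Type*} [CommRing R]

theorem sum_range_add_mul_pow_mul_one_sub (c p : R) (m : ℕ) :
    ∑ s ∈ range m, (c + s) * p ^ s * (1 - p) =
      c - (c + m) * p ^ m + p * ∑ s ∈ range m, p ^ s := by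
  induction m with
  | zero => simp
  | succ m ih =>
    rw [sum_range_succ, ih, sum_range_succ]
    push_cast
    ring

theorem expected_input_length_eq (p : R) (n : ℕ) :
    (n : R) * p ^ n + ∑ t ∈ Icc 1 n, ((n - t + 1 : ℕ) : R) * p ^ (n - t) * (1 - p) =
      ∑ s ∈ range n, p ^ s := by
  have hsum : ∑ t ∈ Icc 1 n, ((n - t + 1 : ℕ) : R) * p ^ (n - t) * (1 - p) =
      ∑ s ∈ range n, (1 + s) * p ^ s * (1 - p) := by
    have h := sum_Icc_reflect (fun s => (1 + (s : R)) * p ^ s * (1 - p)) 0 n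
    rw [zero_add, Nat.sub_zero] at h
    rw [← h]
    refine sum_congr rfl fun t _ => ?_
    push_cast
    ring
  rw [hsum, sum_range_add_mul_pow_mul_one_sub]
  linear_combination -mul_neg_geom_sum p n

theorem expected_output_length_eq (p : R) {d n j : ℕ} (hj : j ≤ n) :
    (∑ i ∈ range j, ((n + d - i + 1 : ℕ) : R) * p ^ (n - i - 1) * (1 - p)) +
        ((n + d - j + 1 : ℕ) : R) * p ^ n +
        ∑ i ∈ Icc (j + 1) n, ((n + d - i + 1 : ℕ) : R) * p ^ (n - i) * (1 - p) =
      ∑ s ∈ range n, p ^ s + (p ^ (n - j) - (j : R) * p ^ n + (d : R)) := by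
  obtain ⟨m, rfl⟩ := Nat.exists_eq_add_of_le' hj
  have hhead : ∑ i ∈ range j, ((m + j + d - i + 1 : ℕ) : R) * p ^ (m + j - i - 1) * (1 - p) =
      p ^ m * ∑ r ∈ range j, ((m + d + 2 : R) + r) * p ^ r * (1 - p) := by
    rw [← sum_range_reflect, mul_sum]
    refine sum_congr rfl fun r hr => ?_
    have hr : r < j := mem_range.1 hr
    rw [show m + j + d - (j - 1 - r) + 1 = m + d + 2 + r by omega,
      show m + j - (j - 1 - r) - 1 = m + r by omega, pow_add]
    push_cast
    ring
  have htail :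
      ∑ i ∈ Icc (j + 1) (m + j), ((m + j + d - i + 1 : ℕ) : R) * p ^ (m + j - i) * (1 - p) =
      ∑ s ∈ range m, ((d + 1 : R) + s) * p ^ s * (1 - p) := by
    rw [← Nat.add_sub_cancel m j, ← sum_Icc_reflect, Nat.add_sub_cancel]
    refine sum_congr rfl fun i hi => ?_
    have hi : i ≤ m + j := (mem_Icc.1 hi).2
    rw [show m + j + d - i + 1 = d + 1 + (m + j - i) by omega]
    push_cast
    ring
  rw [hhead, htail, Nat.add_sub_cancel, sum_range_add_mul_pow_mul_one_sub,
    sum_range_add_mul_pow_mul_one_sub, sum_range_add,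
    show m + j + d - j + 1 = m + d + 1 by omega]
  simp_rw [pow_add p m, ← mul_sum]
  push_cast
  linear_combination -(p ^ m) * mul_neg_geom_sum p j - mul_neg_geom_sum p m

end CommRing

theorem stmt_14_general (d k n j : ℕ) (hdk : d < k) (hn : n = k - d) (hj : j ≤ n)
    (p : ℝ) (hp1 : p < 1)
    (Lin Lout : ℝ)
    (hLin : Lin = (n : ℝ) * p ^ n +
      ∑ t ∈ Finset.Icc 1 n, ((n - t + 1 : ℕ) : ℝ) * p ^ (n - t) * (1 - p))
    (hLout : Lout =
      (∑ i ∈ Finset.range j, ((k - i + 1 : ℕ) : ℝ) * p ^ (n - i - 1) * (1 - p)) +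
        ((k - j + 1 : ℕ) : ℝ) * p ^ n +
        ∑ i ∈ Finset.Icc (j + 1) n, ((k - i + 1 : ℕ) : ℝ) * p ^ (n - i) * (1 - p)) :
    binEnt p * Lin / Lout =
      binEnt p * (1 - p ^ n) /
        (1 - p ^ n + (1 - p) * (p ^ (n - j) - (j : ℝ) * p ^ n + (d : ℝ))) := by
  obtain rfl : k = n + d := by omega
  rw [hLin, hLout, expected_input_length_eq, expected_output_length_eq p hj,
    ← mul_neg_geom_sum, ← mul_add, mul_left_comm, mul_div_mul_left _ _ (sub_ne_zero.2 hp1.ne')]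

/-- Closed-form expression for the average information rate `R_j(p,d,k)` of the symbol
sliding algorithm SS(j). -/
theorem stmt_14 (d k n j : ℕ) (hdk : d < k) (hn : n = k - d) (hj : j ≤ n)
    (p : ℝ) (hp0 : 0 < p) (hp1 : p < 1)
    (Lin Lout : ℝ)
    (hLin : Lin = (n : ℝ) * p ^ n +
      ∑ t ∈ Finset.Icc 1 n, ((n - t + 1 : ℕ) : ℝ) * p ^ (n - t) * (1 - p))
    (hLout : Lout =
      (∑ i ∈ Finset.range j, ((k - i + 1 : ℕ) : ℝ) * p ^ (n - i - 1) * (1 - p)) +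
        ((k - j + 1 : ℕ) : ℝ) * p ^ n +
        ∑ i ∈ Finset.Icc (j + 1) n, ((k - i + 1 : ℕ) : ℝ) * p ^ (n - i) * (1 - p)) :
    binEnt p * Lin / Lout =
      binEnt p * (1 - p ^ n) /
        (1 - p ^ n + (1 - p) * (p ^ (n - j) - (j : ℝ) * p ^ n + (d : ℝ))) :=
  stmt_14_general d k n j hdk hn hj p hp1 Lin Lout hLin hLout
end

section
/- Let d ≥ 0 be an integer and let λ > 1 be a real number satisfying λ^{-1} + λ^{-(d+1)} = 1. Then h(λ^{-1}) = (1 + d·(1-λ^{-1}))·log₂ λ. (That is, the average rate of the bit stuffing algorithm for the (d,∞) constraint with bias λ^{-1} equals the Shannon capacity log₂ λ.) -/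
theorem stmt_15_general (d : ℕ) (lam : ℝ)
    (hroot : lam⁻¹ + lam⁻¹ ^ (d + 1) = 1) :
    binEnt lam⁻¹ = (1 + (d : ℝ) * (1 - lam⁻¹)) * Real.logb 2 lam := by
  rw [binEnt_of_one_sub_eq_pow (n := d + 1) (by linarith), Real.logb_inv]
  push_cast
  ring

/-- The average rate of bit stuffing for the `(d,∞)` constraint with bias `lam⁻¹`
equals the Shannon capacity `log₂ lam`. -/
theorem stmt_15 (d : ℕ) (lam : ℝ) (hlam : 1 < lam)
    (hroot : lam⁻¹ + lam⁻¹ ^ (d + 1) = 1) :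
    binEnt lam⁻¹ = (1 + (d : ℝ) * (1 - lam⁻¹)) * Real.logb 2 lam :=
  stmt_15_general d lam hroot
end

section
/- Let m ≥ 1 and d ≥ 0 be integers and let λ > 1 be a real number satisfying Σ_{j=d+1}^{d+2^m} λ^{-j} = 1. Then Σ_{i=0}^{m-1} h(1/(1+λ^{-2^i})) = (Σ_{j=1}^{2^m} (d+j)·λ^{-(d+j)})·log₂ λ. (That is, the average information rate of the m-stream interleaving encoder for the (d,d+2^m−1) constraint equals the Shannon capacity log₂ λ, so the interleaving construction with m distribution transformers of biases 1/(1+λ^{-2^i}), 0 ≤ i ≤ m−1, is optimal.) -/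
open Finset

theorem prod_one_add_pow_two_pow {R : Type*} [CommSemiring R] (q : R) (m : ℕ) :
    ∏ i ∈ range m, (1 + q ^ 2 ^ i) = ∑ k ∈ range (2 ^ m), q ^ k := by
  induction m with
  | zero => simp
  | succ m ih =>
    rw [prod_range_succ, ih, pow_succ, mul_two, sum_range_add]
    simp only [pow_add, ← mul_sum]
    ring

theorem sum_two_pow_mul_div_mul_prod {K : Type*} [Field K] (q : K) (m : ℕ)
    (hq : ∀ i, 1 + q ^ 2 ^ i ≠ 0) :
    (∑ i ∈ range m, 2 ^ i * q ^ 2 ^ i / (1 + q ^ 2 ^ i)) * ∏ i ∈ range m, (1 + q ^ 2 ^ i) =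
      ∑ k ∈ range (2 ^ m), (k : K) * q ^ k := by
  induction m with
  | zero => simp
  | succ m ih =>
    have hK : ∑ k ∈ range (2 ^ (m + 1)), (k : K) * q ^ k =
        (1 + q ^ 2 ^ m) * ∑ k ∈ range (2 ^ m), (k : K) * q ^ k +
          2 ^ m * q ^ 2 ^ m * ∑ k ∈ range (2 ^ m), q ^ k := by
      rw [pow_succ, mul_two, sum_range_add, add_mul, one_mul, add_assoc]
      congr 1
      rw [mul_sum, mul_sum, ← sum_add_distrib]
      refine sum_congr rfl fun k _ => ?_
      push_cast
      ring
    rw [hK, ← prod_one_add_pow_two_pow, ← ih, sum_range_succ, prod_range_succ]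
    field_simp [hq m]

theorem binEnt_one_div_one_add {x : ℝ} (hx : 0 < x) :
    binEnt (1 / (1 + x)) = Real.logb 2 (1 + x) - x / (1 + x) * Real.logb 2 x := by
  have hx' : 1 + x ≠ 0 := by positivity
  have h : 1 - 1 / (1 + x) = x / (1 + x) := by field_simp; ring
  rw [binEnt, h, one_div, Real.logb_inv, Real.logb_div hx.ne' hx']
  field_simp
  ring

theorem sum_Icc_add_eq_sum_range {M : Type*} [AddCommMonoid M] (f : ℕ → M) (a n : ℕ) :
    ∑ j ∈ Icc (a + 1) (a + n), f j = ∑ k ∈ range n, f (a + 1 + k) := by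
  rw [← Ico_add_one_right_eq_Icc, sum_Ico_eq_sum_range]
  congr 2
  omega

theorem sum_binEnt_one_div_one_add_pow_two_pow {q : ℝ} (hq : 0 < q) (m : ℕ) :
    ∑ i ∈ range m, binEnt (1 / (1 + q ^ 2 ^ i)) =
      Real.logb 2 (∑ k ∈ range (2 ^ m), q ^ k) -
        Real.logb 2 q * ∑ i ∈ range m, 2 ^ i * q ^ 2 ^ i / (1 + q ^ 2 ^ i) := by
  have hx : ∀ i, 0 < q ^ 2 ^ i := fun i => by positivity
  simp only [binEnt_one_div_one_add (hx _), sum_sub_distrib, Real.logb_pow, mul_sum]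
  rw [← Real.logb_prod _ _ fun i _ => (add_pos one_pos (hx i)).ne', prod_one_add_pow_two_pow]
  congr 1
  refine sum_congr rfl fun i _ => ?_
  push_cast
  ring

theorem sum_Icc_cast_add_mul_pow {R : Type*} [CommSemiring R] (q : R) (d n : ℕ) :
    ∑ j ∈ Icc 1 n, ((d + j : ℕ) : R) * q ^ (d + j) =
      q ^ (d + 1) * ((d + 1) * ∑ k ∈ range n, q ^ k + ∑ k ∈ range n, (k : R) * q ^ k) := by
  have h := sum_Icc_add_eq_sum_range (fun j => ((d + j : ℕ) : R) * q ^ (d + j)) 0 n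
  simp only [zero_add] at h
  simp only [h, mul_sum, ← sum_add_distrib]
  refine sum_congr rfl fun k _ => ?_
  push_cast
  ring

theorem stmt_16_general (m d : ℕ) (lam : ℝ) (hlam : 1 < lam)
    (hroot : ∑ j ∈ Finset.Icc (d + 1) (d + 2 ^ m), lam⁻¹ ^ j = 1) :
    ∑ i ∈ Finset.range m, binEnt (1 / (1 + lam⁻¹ ^ (2 ^ i))) =
      (∑ j ∈ Finset.Icc 1 (2 ^ m), ((d + j : ℕ) : ℝ) * lam⁻¹ ^ (d + j)) *
        Real.logb 2 lam := by
  have hq : 0 < lam⁻¹ := by positivity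
  have hSK := sum_two_pow_mul_div_mul_prod lam⁻¹ m fun i => (add_pos one_pos (pow_pos hq _)).ne'
  rw [prod_one_add_pow_two_pow] at hSK
  simp only [sum_Icc_add_eq_sum_range, pow_add _ (d + 1), ← mul_sum] at hroot
  have hlogG : Real.logb 2 (∑ k ∈ range (2 ^ m), lam⁻¹ ^ k) = (d + 1) * Real.logb 2 lam := by
    rw [eq_inv_of_mul_eq_one_right hroot, inv_pow, inv_inv, Real.logb_pow]
    push_cast
    ring
  rw [sum_binEnt_one_div_one_add_pow_two_pow hq, hlogG, sum_Icc_cast_add_mul_pow, Real.logb_inv]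
  set L := Real.logb 2 lam
  set S := ∑ i ∈ range m, 2 ^ i * lam⁻¹ ^ 2 ^ i / (1 + lam⁻¹ ^ 2 ^ i)
  linear_combination (-(d + 1) * L - L * S) * hroot + lam⁻¹ ^ (d + 1) * L * hSK

/-- The average information rate of the `m`-stream interleaving encoder for the
`(d, d+2^m-1)` constraint equals the Shannon capacity `log₂ lam`. -/
theorem stmt_16 (m d : ℕ) (hm : 1 ≤ m) (lam : ℝ) (hlam : 1 < lam)
    (hroot : ∑ j ∈ Finset.Icc (d + 1) (d + 2 ^ m), lam⁻¹ ^ j = 1) :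
    ∑ i ∈ Finset.range m, binEnt (1 / (1 + lam⁻¹ ^ (2 ^ i))) =
      (∑ j ∈ Finset.Icc 1 (2 ^ m), ((d + j : ℕ) : ℝ) * lam⁻¹ ^ (d + j)) *
        Real.logb 2 lam :=
  stmt_16_general m d lam hlam hroot
end

section
/- Let m ≥ 1 be an integer and let x be a real number with 0 < x < 1. Then Σ_{j=1}^{2^m-1} j·x^j = (Π_{i=0}^{m-1} (1 + x^{2^i})) · (Σ_{i=0}^{m-1} 2^i·x^{2^i}/(1 + x^{2^i})). -/
/-!
Doubling the range `[0, 2^m)` splits `∑ j x^j` into `(1 + x^(2^m))` times the old sum, so the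
geometric sum up to `2^m` is `∏ (1 + x^(2^i))`. The weighted sum `∑ j x^j` obeys the same
doubling with the extra term `2^m x^(2^m) ∏_{i<m} (1 + x^(2^i))`; this is exactly the product
rule for `x · d/dx` applied to the product, which is the right-hand side.
-/

open Finset

lemma sum_range_two_pow_succ {M : Type*} [AddCommMonoid M] (f : ℕ → M) (m : ℕ) :
    ∑ j ∈ range (2 ^ (m + 1)), f j =
      ∑ j ∈ range (2 ^ m), f j + ∑ j ∈ range (2 ^ m), f (2 ^ m + j) := by
  rw [pow_succ, mul_two, sum_range_add]

lemma sum_range_two_pow_pow_eq_prod {R : Type*} [CommSemiring R] (x : R) (m : ℕ) :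
    ∑ j ∈ range (2 ^ m), x ^ j = ∏ i ∈ range m, (1 + x ^ 2 ^ i) := by
  induction m with
  | zero => simp
  | succ m ih =>
    simp_rw [sum_range_two_pow_succ, pow_add, ← mul_sum, prod_range_succ, ← ih]
    ring

lemma sum_range_two_pow_mul_pow_eq {K : Type*} [Field K] (x : K) (m : ℕ)
    (hx : ∀ i < m, 1 + x ^ 2 ^ i ≠ 0) :
    ∑ j ∈ range (2 ^ m), (j : K) * x ^ j =
      (∏ i ∈ range m, (1 + x ^ 2 ^ i)) *
        ∑ i ∈ range m, 2 ^ i * x ^ 2 ^ i / (1 + x ^ 2 ^ i) := by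
  induction m with
  | zero => simp
  | succ m ih =>
    have hm : 1 + x ^ 2 ^ m ≠ 0 := hx m m.lt_add_one
    have upper (j : ℕ) : ((2 ^ m + j : ℕ) : K) * x ^ (2 ^ m + j) =
        x ^ 2 ^ m * (2 ^ m * x ^ j) + x ^ 2 ^ m * ((j : K) * x ^ j) := by
      push_cast
      ring
    rw [sum_range_two_pow_succ, sum_congr rfl fun j _ => upper j, sum_add_distrib, ← mul_sum,
      ← mul_sum, ← mul_sum, ih fun i hi => hx i (hi.trans m.lt_add_one),
      sum_range_two_pow_pow_eq_prod, prod_range_succ, sum_range_succ]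
    field_simp
    ring

lemma sum_Icc_one_pred_eq_sum_range {M : Type*} [AddCommMonoid M] (f : ℕ → M) (h0 : f 0 = 0)
    (n : ℕ) : ∑ j ∈ Icc 1 (n - 1), f j = ∑ j ∈ range n, f j := by
  cases n with
  | zero => simp
  | succ n =>
    rw [sum_range_succ', h0, add_zero, ← Ico_add_one_right_eq_Icc, sum_Ico_eq_sum_range]
    simp [add_comm]

theorem stmt_19_general (m : ℕ) (x : ℝ) (hx0 : 0 < x) :
    ∑ j ∈ Finset.Icc 1 (2 ^ m - 1 : ℕ), (j : ℝ) * x ^ j =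
      (∏ i ∈ Finset.range m, (1 + x ^ (2 ^ i))) *
        ∑ i ∈ Finset.range m, (2 ^ i : ℝ) * x ^ (2 ^ i) / (1 + x ^ (2 ^ i)) := by
  rw [sum_Icc_one_pred_eq_sum_range (fun j : ℕ => (j : ℝ) * x ^ j) (by simp)]
  exact sum_range_two_pow_mul_pow_eq x m fun i _ => by positivity

/-- Key identity in the proof that the `m`-stream interleaving construction achieves
the capacity of the `(d, d+2^m-1)` constraint. -/
theorem stmt_19 (m : ℕ) (hm : 1 ≤ m) (x : ℝ) (hx0 : 0 < x) (hx1 : x < 1) :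
    ∑ j ∈ Finset.Icc 1 (2 ^ m - 1 : ℕ), (j : ℝ) * x ^ j =
      (∏ i ∈ Finset.range m, (1 + x ^ (2 ^ i))) *
        ∑ i ∈ Finset.range m, (2 ^ i : ℝ) * x ^ (2 ^ i) / (1 + x ^ (2 ^ i)) :=
  stmt_19_general m x hx0
end
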